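/- Let a ∈ L^1(ℝ) ∩ L^2(ℝ) be continuous and nonnegative and 1 < α < 2. Then the functional I₂(q) = ∫_ℝ a(t)|q(t)|^α dt is Fréchet differentiable on H^1(ℝ, ℝ^n) with derivative I₂'(q)v = α∫_ℝ a(t)|q(t)|^{α−2}(q(t)·v(t)) dt, and q ↦ I₂'(q) is continuous (so I₂ ∈ C^1(H^1, ℝ)). -/

import Mathlib

open MeasureTheory Filter Real

/-- `q ∈ H¹(ℝ, ℝⁿ)` (differentiable representative with `‖q‖² + ‖q'‖²` integrable). -/
def IsH1 {n : ℕ} (q : ℝ → EuclideanSpace ℝ (Fin n)) : Prop :=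
  Differentiable ℝ q ∧ Integrable (fun t => ‖q t‖ ^ 2 + ‖deriv q t‖ ^ 2)

/-- The `H¹` norm `(∫ (‖q‖² + ‖q'‖²))^{1/2}`. -/
noncomputable def H1norm {n : ℕ} (q : ℝ → EuclideanSpace ℝ (Fin n)) : ℝ :=
  (∫ t : ℝ, (‖q t‖ ^ 2 + ‖deriv q t‖ ^ 2)) ^ ((1 : ℝ) / 2)

/-- The nonlinear part of the functional, `I₂(q) = ∫ a(t)‖q(t)‖^α`. -/
noncomputable def I2 {n : ℕ} (a : ℝ → ℝ) (α : ℝ)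
    (q : ℝ → EuclideanSpace ℝ (Fin n)) : ℝ :=
  ∫ t : ℝ, a t * ‖q t‖ ^ α

/-- The candidate derivative, `I₂'(q)v = α ∫ a(t)‖q(t)‖^{α−2}(q(t)·v(t))`. -/
noncomputable def dI2 {n : ℕ} (a : ℝ → ℝ) (α : ℝ)
    (q v : ℝ → EuclideanSpace ℝ (Fin n)) : ℝ :=
  α * ∫ t : ℝ, a t * ‖q t‖ ^ (α - 2) * (inner ℝ (q t) (v t) : ℝ)

open Topology

/-! For `-1 < p ≤ 0` the map `x ↦ ‖x‖ ^ p • x` is `(p + 1)`-Hölder with constant `4`; with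
`p = α - 2` it is `α⁻¹` times the gradient of `x ↦ ‖x‖ ^ α`, so the mean value inequality gives
`|‖x + y‖ ^ α - ‖x‖ ^ α - α ‖x‖ ^ (α - 2) ⟪x, y⟫| ≤ 4 α ‖y‖ ^ α`. Functions in `H¹(ℝ)` satisfy
`‖φ t‖ ≤ ‖φ‖_{H¹}`, so integrating these two pointwise estimates against `|a| ∈ L¹` bounds the
Taylor remainder of `I₂` by `4 α ‖a‖₁ ‖φ‖_{H¹} ^ α` and `|I₂'(q') φ - I₂'(q) φ|` by
`4 α ‖a‖₁ ‖q' - q‖_{H¹} ^ (α - 1) ‖φ‖_{H¹}`. -/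

section Pointwise

variable {E : Type*} [NormedAddCommGroup E] [NormedSpace ℝ E]

lemma norm_rpow_smul_self (x : E) {p : ℝ} (hp : p + 1 ≠ 0) :
    ‖‖x‖ ^ p • x‖ = ‖x‖ ^ (p + 1) := by
  rw [norm_smul, norm_of_nonneg (by positivity), rpow_add_one' (norm_nonneg x) hp]

lemma abs_rpow_sub_rpow_le_of_nonpos {p r s : ℝ} (hp : p ≤ 0) (hr : 0 < r) (hrs : r ≤ s) :
    |s ^ p - r ^ p| ≤ -p * r ^ (p - 1) * (s - r) := by
  have hderiv : ∀ u ∈ Set.Icc r s,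
      HasDerivWithinAt (fun u : ℝ => u ^ p) (p * u ^ (p - 1)) (Set.Icc r s) u := fun u hu =>
    (hasDerivAt_rpow_const (Or.inl (hr.trans_le hu.1).ne')).hasDerivWithinAt
  have hbound : ∀ u ∈ Set.Icc r s, ‖p * u ^ (p - 1)‖ ≤ -p * r ^ (p - 1) := fun u hu => by
    rw [norm_mul, norm_of_nonpos hp, norm_of_nonneg (rpow_nonneg (hr.le.trans hu.1) _)]
    exact mul_le_mul_of_nonneg_left (rpow_le_rpow_of_nonpos hr hu.1 (by linarith))
      (neg_nonneg.2 hp)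
  simpa [← Real.norm_eq_abs, norm_of_nonneg (sub_nonneg.2 hrs)] using
    (convex_Icc r s).norm_image_sub_le_of_norm_hasDerivWithin_le hderiv hbound
      (Set.left_mem_Icc.2 hrs) (Set.right_mem_Icc.2 hrs)

lemma norm_rpow_smul_sub_le_of_le_two_mul {p : ℝ} (hp₀ : -1 < p) (hp₁ : p ≤ 0) {x y : E}
    (hyx : ‖y‖ ≤ ‖x‖) (hx : ‖x‖ ≤ 2 * ‖x - y‖) :
    ‖‖x‖ ^ p • x - ‖y‖ ^ p • y‖ ≤ 4 * ‖x - y‖ ^ (p + 1) := by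
  have hp : 0 ≤ p + 1 := by linarith
  have h2 : (2 : ℝ) ^ (p + 1) ≤ 2 := rpow_le_self_of_one_le one_le_two (by linarith)
  calc ‖‖x‖ ^ p • x - ‖y‖ ^ p • y‖ ≤ ‖‖x‖ ^ p • x‖ + ‖‖y‖ ^ p • y‖ := norm_sub_le _ _
    _ = ‖x‖ ^ (p + 1) + ‖y‖ ^ (p + 1) := by
        rw [norm_rpow_smul_self x (by linarith), norm_rpow_smul_self y (by linarith)]
    _ ≤ (2 * ‖x - y‖) ^ (p + 1) + (2 * ‖x - y‖) ^ (p + 1) := by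
        gcongr
        exact hyx.trans hx
    _ = 2 * 2 ^ (p + 1) * ‖x - y‖ ^ (p + 1) := by
        rw [mul_rpow zero_le_two (norm_nonneg _)]; ring
    _ ≤ 4 * ‖x - y‖ ^ (p + 1) := by
        have := rpow_nonneg (norm_nonneg (x - y)) (p + 1)
        nlinarith

lemma norm_rpow_smul_sub_le_of_norm_sub_lt {p : ℝ} (hp₀ : -1 < p) (hp₁ : p ≤ 0) {x y : E}
    (hyx : ‖y‖ ≤ ‖x‖) (hd : 0 < ‖x - y‖) (hdy : ‖x - y‖ < ‖y‖) :
    ‖‖x‖ ^ p • x - ‖y‖ ^ p • y‖ ≤ 2 * ‖x - y‖ ^ (p + 1) := by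
  set d := ‖x - y‖
  have hy : 0 < ‖y‖ := hd.trans hdy
  have hdp : d ^ p * d = d ^ (p + 1) := (rpow_add_one hd.ne' p).symm
  have hxy : ‖x‖ - ‖y‖ ≤ d := (le_abs_self _).trans (abs_norm_sub_norm_le x y)
  have hfirst : ‖‖x‖ ^ p • (x - y)‖ ≤ d ^ (p + 1) := by
    rw [norm_smul, norm_of_nonneg (by positivity), ← hdp]
    exact mul_le_mul_of_nonneg_right (rpow_le_rpow_of_nonpos hd (by linarith) hp₁) hd.le
  have hsecond : ‖(‖x‖ ^ p - ‖y‖ ^ p) • y‖ ≤ d ^ (p + 1) := by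
    rw [norm_smul, Real.norm_eq_abs, ← hdp]
    calc |‖x‖ ^ p - ‖y‖ ^ p| * ‖y‖ ≤ -p * ‖y‖ ^ (p - 1) * (‖x‖ - ‖y‖) * ‖y‖ := by
          gcongr
          exact abs_rpow_sub_rpow_le_of_nonpos hp₁ hy hyx
      _ = -p * ‖y‖ ^ p * (‖x‖ - ‖y‖) := by
          rw [show ‖y‖ ^ p = ‖y‖ ^ (p - 1 + 1) by ring_nf, rpow_add_one hy.ne']; ring
      _ ≤ 1 * d ^ p * d :=
          mul_le_mul (mul_le_mul (by linarith) (rpow_le_rpow_of_nonpos hd hdy.le hp₁)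
            (by positivity) zero_le_one) hxy (by linarith) (by positivity)
      _ = d ^ p * d := by ring
  calc ‖‖x‖ ^ p • x - ‖y‖ ^ p • y‖ = ‖‖x‖ ^ p • (x - y) + (‖x‖ ^ p - ‖y‖ ^ p) • y‖ := by
        rw [smul_sub, sub_smul]; abel_nf
    _ ≤ d ^ (p + 1) + d ^ (p + 1) := (norm_add_le _ _).trans (add_le_add hfirst hsecond)
    _ = 2 * d ^ (p + 1) := by ring

lemma norm_rpow_smul_sub_rpow_smul_le {p : ℝ} (hp₀ : -1 < p) (hp₁ : p ≤ 0) (x y : E) :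
    ‖‖x‖ ^ p • x - ‖y‖ ^ p • y‖ ≤ 4 * ‖x - y‖ ^ (p + 1) := by
  wlog hyx : ‖y‖ ≤ ‖x‖ generalizing x y
  · simpa only [norm_sub_rev] using this y x (le_of_not_ge hyx)
  rcases eq_or_ne x y with rfl | hne
  · simp [zero_rpow (by linarith : p + 1 ≠ 0)]
  by_cases hx : ‖x‖ ≤ 2 * ‖x - y‖
  · exact norm_rpow_smul_sub_le_of_le_two_mul hp₀ hp₁ hyx hx
  · have hd : 0 < ‖x - y‖ := norm_pos_iff.2 (sub_ne_zero.2 hne)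
    have hdy : ‖x - y‖ < ‖y‖ := by linarith [norm_sub_norm_le x y]
    have := rpow_nonneg hd.le (p + 1)
    linarith [norm_rpow_smul_sub_le_of_norm_sub_lt hp₀ hp₁ hyx hd hdy]

end Pointwise

section InnerProductSpace

variable {E : Type*} [NormedAddCommGroup E] [InnerProductSpace ℝ E]

lemma abs_norm_add_rpow_sub_sub_le {α : ℝ} (hα₁ : 1 < α) (hα₂ : α ≤ 2) (x y : E) :
    |‖x + y‖ ^ α - ‖x‖ ^ α - α * ‖x‖ ^ (α - 2) * inner ℝ x y| ≤ 4 * α * ‖y‖ ^ α := by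
  let L : E →L[ℝ] ℝ := (α * ‖x‖ ^ (α - 2)) • innerSL ℝ x
  have hderiv : ∀ z ∈ Metric.closedBall x ‖y‖, HasFDerivWithinAt (fun z => ‖z‖ ^ α)
      ((α * ‖z‖ ^ (α - 2)) • innerSL ℝ z) (Metric.closedBall x ‖y‖) z :=
    fun z _ => (hasFDerivAt_norm_rpow z hα₁).hasFDerivWithinAt
  have hbound : ∀ z ∈ Metric.closedBall x ‖y‖,
      ‖(α * ‖z‖ ^ (α - 2)) • innerSL ℝ z - L‖ ≤ 4 * α * ‖y‖ ^ (α - 1) := by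
    intro z hz
    have hL : (α * ‖z‖ ^ (α - 2)) • innerSL ℝ z - L
        = innerSL ℝ (α • (‖z‖ ^ (α - 2) • z - ‖x‖ ^ (α - 2) • x)) := by
      simp only [L, map_smul, map_sub, smul_sub, smul_smul]
    have hzx : ‖z - x‖ ≤ ‖y‖ := by rwa [Metric.mem_closedBall, dist_eq_norm] at hz
    have hHolder := norm_rpow_smul_sub_rpow_smul_le (by linarith : -1 < α - 2)
      (by linarith : α - 2 ≤ 0) z x
    rw [show α - 2 + 1 = α - 1 by ring] at hHolder
    rw [hL, innerSL_apply_norm, norm_smul, norm_of_nonneg (by linarith), mul_comm 4 α, mul_assoc]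
    gcongr
    exact hHolder.trans (by gcongr)
  have hmvt := (convex_closedBall x ‖y‖).norm_image_sub_le_of_norm_hasFDerivWithin_le' hderiv
    hbound (Metric.mem_closedBall_self (norm_nonneg y))
    (by simp [Metric.mem_closedBall, dist_eq_norm] : x + y ∈ Metric.closedBall x ‖y‖)
  have hLy : L y = α * ‖x‖ ^ (α - 2) * inner ℝ x y := by simp [L]
  have hpow : ‖y‖ ^ (α - 1) * ‖y‖ = ‖y‖ ^ α := by
    rw [← rpow_add_one' (norm_nonneg y) (by linarith), sub_add_cancel]
  rwa [add_sub_cancel_left, hLy, Real.norm_eq_abs, mul_assoc (4 * α), hpow] at hmvt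

lemma sq_norm_le_integral_sq_norm_add_sq_norm_deriv [CompleteSpace E] {φ : ℝ → E}
    (hφ : Differentiable ℝ φ) (hint : Integrable fun t => ‖φ t‖ ^ 2 + ‖deriv φ t‖ ^ 2) (t : ℝ) :
    ‖φ t‖ ^ 2 ≤ ∫ s, ‖φ s‖ ^ 2 + ‖deriv φ s‖ ^ 2 := by
  set g' : ℝ → ℝ := fun s => 2 * inner ℝ (φ s) (deriv φ s)
  have hderiv : ∀ s, HasDerivAt (‖φ ·‖ ^ 2) (g' s) s := fun s => (hφ s).hasDerivAt.norm_sq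
  have hg'_le : ∀ s, ‖g' s‖ ≤ ‖φ s‖ ^ 2 + ‖deriv φ s‖ ^ 2 := fun s => by
    rw [norm_mul, Real.norm_two, Real.norm_eq_abs]
    nlinarith [abs_real_inner_le_norm (φ s) (deriv φ s), sq_nonneg (‖φ s‖ - ‖deriv φ s‖)]
  have hφ_meas := hφ.continuous.aestronglyMeasurable (μ := volume)
  have hg'_int : Integrable g' :=
    hint.mono' ((hφ_meas.inner (aestronglyMeasurable_deriv φ volume)).const_mul 2)
      (Eventually.of_forall hg'_le)
  have hg_int : Integrable (‖φ ·‖ ^ 2) :=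
    hint.mono' (hφ_meas.norm.pow 2) (Eventually.of_forall fun s => by
      rw [norm_of_nonneg (by positivity)]; nlinarith [sq_nonneg ‖deriv φ s‖])
  have hlim := tendsto_zero_of_hasDerivAt_of_integrableOn_Iic (a := t) (fun s _ => hderiv s)
    hg'_int.integrableOn hg_int.integrableOn
  have hftc := integral_Iic_of_hasDerivAt_of_tendsto' (a := t) (fun s _ => hderiv s)
    hg'_int.integrableOn hlim
  rw [sub_zero] at hftc
  calc ‖φ t‖ ^ 2 = ∫ s in Set.Iic t, g' s := hftc.symm
    _ ≤ ∫ s in Set.Iic t, ‖φ s‖ ^ 2 + ‖deriv φ s‖ ^ 2 :=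
        integral_mono hg'_int.integrableOn hint.integrableOn
          fun s => (le_abs_self _).trans (hg'_le s)
    _ ≤ ∫ s, ‖φ s‖ ^ 2 + ‖deriv φ s‖ ^ 2 :=
        setIntegral_le_integral hint (Eventually.of_forall fun s => by positivity)

lemma abs_rpow_mul_inner_le (x y : E) {p : ℝ} (hp : p + 1 ≠ 0) :
    |‖x‖ ^ p * inner ℝ x y| ≤ ‖x‖ ^ (p + 1) * ‖y‖ := by
  rw [← real_inner_smul_left, ← norm_rpow_smul_self x hp]
  exact abs_real_inner_le_norm _ _

end InnerProductSpace

lemma abs_integral_mul_le {X : Type*} [MeasurableSpace X] {μ : Measure X} {a g : X → ℝ}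
    (ha : Integrable a μ) {C : ℝ} (hg : ∀ x, |g x| ≤ C) :
    |∫ x, a x * g x ∂μ| ≤ C * ∫ x, |a x| ∂μ := by
  rw [← integral_const_mul, ← Real.norm_eq_abs]
  refine norm_integral_le_of_norm_le (ha.abs.const_mul C) (Eventually.of_forall fun x => ?_)
  rw [norm_mul, Real.norm_eq_abs, Real.norm_eq_abs, mul_comm]
  exact mul_le_mul_of_nonneg_right (hg x) (abs_nonneg _)

lemma exists_pos_mul_rpow_le (C : ℝ) {p ε : ℝ} (hp : 0 < p) (hε : 0 < ε) :
    ∃ δ : ℝ, 0 < δ ∧ C * δ ^ p ≤ ε := by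
  have hlim : Tendsto (fun δ : ℝ => C * δ ^ p) (𝓝[>] 0) (𝓝 0) :=
    ((continuous_const.mul (continuous_rpow_const hp.le)).tendsto' 0 0
      (by simp [zero_rpow hp.ne'])).mono_left nhdsWithin_le_nhds
  obtain ⟨δ, hδε, hδ⟩ := ((hlim.eventually (ge_mem_nhds hε)).and self_mem_nhdsWithin).exists
  exact ⟨δ, hδ, hδε⟩

lemma integrable_mul_norm_rpow {E : Type*} [NormedAddCommGroup E] {a : ℝ → ℝ}
    (ha : Integrable a) {α M : ℝ} (hα : 0 ≤ α) {q : ℝ → E} (hq : Continuous q)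
    (hM : ∀ t, ‖q t‖ ≤ M) :
    Integrable fun t => a t * ‖q t‖ ^ α :=
  ha.mul_bdd (hq.norm.rpow_const fun _ => Or.inr hα).aestronglyMeasurable
    (Eventually.of_forall fun t => by
      rw [norm_of_nonneg (by positivity)]; exact rpow_le_rpow (norm_nonneg _) (hM t) hα)

section H1

variable {n : ℕ}

lemma H1norm_nonneg (q : ℝ → EuclideanSpace ℝ (Fin n)) : 0 ≤ H1norm q :=
  rpow_nonneg (integral_nonneg fun _ => by positivity) _

lemma IsH1.norm_le_H1norm {φ : ℝ → EuclideanSpace ℝ (Fin n)} (hφ : IsH1 φ) (t : ℝ) :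
    ‖φ t‖ ≤ H1norm φ := by
  rw [H1norm, ← Real.sqrt_eq_rpow, ← Real.sqrt_sq (norm_nonneg (φ t))]
  exact Real.sqrt_le_sqrt (sq_norm_le_integral_sq_norm_add_sq_norm_deriv hφ.1 hφ.2 t)

lemma IsH1.sub {q q' : ℝ → EuclideanSpace ℝ (Fin n)} (hq' : IsH1 q') (hq : IsH1 q) :
    IsH1 (fun t => q' t - q t) := by
  refine ⟨hq'.1.sub hq.1, ?_⟩
  have hderiv : deriv (fun t => q' t - q t) = fun t => deriv q' t - deriv q t :=
    funext fun t => deriv_sub (hq'.1 t) (hq.1 t)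
  have hsq : ∀ u v : EuclideanSpace ℝ (Fin n), ‖u - v‖ ^ 2 ≤ 2 * (‖u‖ ^ 2 + ‖v‖ ^ 2) :=
    fun u v => (pow_le_pow_left₀ (norm_nonneg _) (norm_sub_le u v) 2).trans add_sq_le
  rw [hderiv]
  refine ((hq'.2.add hq.2).const_mul 2).mono' ?_ (Eventually.of_forall fun t => ?_)
  · exact ((hq'.1.continuous.sub hq.1.continuous).aestronglyMeasurable.norm.pow 2).add
      (((aestronglyMeasurable_deriv q' volume).sub
        (aestronglyMeasurable_deriv q volume)).norm.pow 2)
  · rw [norm_of_nonneg (by positivity)]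
    simp only [Pi.add_apply]
    linarith [hsq (q' t) (q t), hsq (deriv q' t) (deriv q t)]

lemma IsH1.integrable_mul_rpow_mul_inner {a : ℝ → ℝ} (ha : Integrable a) {α : ℝ} (hα : 1 < α)
    {q φ : ℝ → EuclideanSpace ℝ (Fin n)} (hq : IsH1 q) (hφ : IsH1 φ) :
    Integrable fun t => a t * ‖q t‖ ^ (α - 2) * inner ℝ (q t) (φ t) := by
  simp_rw [mul_assoc]
  have hq_meas := hq.1.continuous.measurable
  refine ha.mul_bdd (c := H1norm q ^ (α - 2 + 1) * H1norm φ)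
    ((hq_meas.norm.pow_const _).mul (hq_meas.inner hφ.1.continuous.measurable)).aestronglyMeasurable
    (Eventually.of_forall fun t => ?_)
  rw [Real.norm_eq_abs]
  refine (abs_rpow_mul_inner_le _ _ (by linarith)).trans ?_
  exact mul_le_mul (rpow_le_rpow (norm_nonneg _) (hq.norm_le_H1norm t) (by linarith))
    (hφ.norm_le_H1norm t) (norm_nonneg _) (rpow_nonneg (H1norm_nonneg q) _)

lemma abs_I2_add_sub_I2_sub_dI2_le {a : ℝ → ℝ} (ha : Integrable a) {α : ℝ} (hα₁ : 1 < α)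
    (hα₂ : α ≤ 2) {q φ : ℝ → EuclideanSpace ℝ (Fin n)} (hq : IsH1 q) (hφ : IsH1 φ) :
    |I2 a α (fun t => q t + φ t) - I2 a α q - dI2 a α q φ|
      ≤ 4 * α * H1norm φ ^ α * ∫ t, |a t| := by
  have hint_add := integrable_mul_norm_rpow ha (by linarith) (q := fun t => q t + φ t)
    (hq.1.continuous.add hφ.1.continuous)
    fun t => (norm_add_le _ _).trans (add_le_add (hq.norm_le_H1norm t) (hφ.norm_le_H1norm t))
  have hint := integrable_mul_norm_rpow ha (by linarith) hq.1.continuous hq.norm_le_H1norm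
  have hint_inner := hq.integrable_mul_rpow_mul_inner ha hα₁ hφ
  have hsplit : I2 a α (fun t => q t + φ t) - I2 a α q - dI2 a α q φ
      = ∫ t, a t * (‖q t + φ t‖ ^ α - ‖q t‖ ^ α
          - α * ‖q t‖ ^ (α - 2) * inner ℝ (q t) (φ t)) := by
    have hint_sub : Integrable fun t => a t * ‖q t + φ t‖ ^ α - a t * ‖q t‖ ^ α :=
      hint_add.sub hint
    rw [I2, I2, dI2, ← integral_sub hint_add hint, ← integral_const_mul,
      ← integral_sub hint_sub (hint_inner.const_mul α)]
    congr 1; ext t; ring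
  rw [hsplit]
  refine abs_integral_mul_le ha fun t =>
    (abs_norm_add_rpow_sub_sub_le hα₁ hα₂ (q t) (φ t)).trans ?_
  gcongr
  exact hφ.norm_le_H1norm t

lemma abs_dI2_sub_dI2_le {a : ℝ → ℝ} (ha : Integrable a) {α : ℝ} (hα₁ : 1 < α)
    (hα₂ : α ≤ 2) {q q' φ : ℝ → EuclideanSpace ℝ (Fin n)} (hq : IsH1 q) (hq' : IsH1 q')
    (hφ : IsH1 φ) :
    |dI2 a α q' φ - dI2 a α q φ|
      ≤ 4 * α * H1norm (fun t => q' t - q t) ^ (α - 1) * H1norm φ * ∫ t, |a t| := by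
  have hsplit : dI2 a α q' φ - dI2 a α q φ = α * ∫ t, a t *
      inner ℝ (‖q' t‖ ^ (α - 2) • q' t - ‖q t‖ ^ (α - 2) • q t) (φ t) := by
    rw [dI2, dI2, ← mul_sub, ← integral_sub (hq'.integrable_mul_rpow_mul_inner ha hα₁ hφ)
      (hq.integrable_mul_rpow_mul_inner ha hα₁ hφ)]
    congr 2; ext t
    rw [inner_sub_left, real_inner_smul_left, real_inner_smul_left]; ring
  have hbound : ∀ t, |inner ℝ (‖q' t‖ ^ (α - 2) • q' t - ‖q t‖ ^ (α - 2) • q t) (φ t)|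
      ≤ 4 * H1norm (fun t => q' t - q t) ^ (α - 1) * H1norm φ := fun t => by
    have hHolder := norm_rpow_smul_sub_rpow_smul_le (by linarith : -1 < α - 2)
      (by linarith : α - 2 ≤ 0) (q' t) (q t)
    rw [show α - 2 + 1 = α - 1 by ring] at hHolder
    refine (abs_real_inner_le_norm _ _).trans (mul_le_mul (hHolder.trans ?_)
      (hφ.norm_le_H1norm t) (norm_nonneg _)
      (mul_nonneg zero_le_four (rpow_nonneg (H1norm_nonneg _) _)))
    gcongr
    exact (hq'.sub hq).norm_le_H1norm t
  rw [hsplit, abs_mul, abs_of_pos (by linarith : 0 < α)]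
  calc α * |∫ t, a t * inner ℝ (‖q' t‖ ^ (α - 2) • q' t - ‖q t‖ ^ (α - 2) • q t) (φ t)|
      ≤ α * (4 * H1norm (fun t => q' t - q t) ^ (α - 1) * H1norm φ * ∫ t, |a t|) := by
        gcongr; exact abs_integral_mul_le ha hbound
    _ = _ := by ring

end H1

theorem stmt_17_general (n : ℕ) (a : ℝ → ℝ) (α : ℝ)
    (ha_L1 : Integrable a)
    (hα1 : 1 < α) (hα2 : α < 2) :
    (∀ q : ℝ → EuclideanSpace ℝ (Fin n), IsH1 q →
      ∀ ε : ℝ, 0 < ε → ∃ δ : ℝ, 0 < δ ∧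
        ∀ φ : ℝ → EuclideanSpace ℝ (Fin n), IsH1 φ → H1norm φ ≤ δ →
          |I2 a α (fun t => q t + φ t) - I2 a α q - dI2 a α q φ|
            ≤ ε * H1norm φ) ∧
    (∀ q : ℝ → EuclideanSpace ℝ (Fin n), IsH1 q →
      ∀ ε : ℝ, 0 < ε → ∃ δ : ℝ, 0 < δ ∧
        ∀ q' : ℝ → EuclideanSpace ℝ (Fin n), IsH1 q' →
          H1norm (fun t => q' t - q t) ≤ δ →
          ∀ φ : ℝ → EuclideanSpace ℝ (Fin n), IsH1 φ → H1norm φ ≤ 1 →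
            |dI2 a α q' φ - dI2 a α q φ| ≤ ε) := by
  have hα : 0 < α - 1 := sub_pos.2 hα1
  refine ⟨fun q hq ε hε => ?_, fun q hq ε hε => ?_⟩
  · obtain ⟨δ, hδ, hδε⟩ := exists_pos_mul_rpow_le (4 * α * ∫ t, |a t|) hα hε
    refine ⟨δ, hδ, fun φ hφ hφδ => ?_⟩
    have hφ₀ := H1norm_nonneg φ
    calc _ ≤ 4 * α * H1norm φ ^ α * ∫ t, |a t| :=
          abs_I2_add_sub_I2_sub_dI2_le ha_L1 hα1 hα2.le hq hφ
      _ = (4 * α * ∫ t, |a t|) * H1norm φ ^ (α - 1) * H1norm φ := by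
          rw [mul_assoc _ (H1norm φ ^ (α - 1)), ← rpow_add_one' hφ₀ (by linarith), sub_add_cancel]
          ring
      _ ≤ (4 * α * ∫ t, |a t|) * δ ^ (α - 1) * H1norm φ := by gcongr
      _ ≤ ε * H1norm φ := by gcongr
  · obtain ⟨δ, hδ, hδε⟩ := exists_pos_mul_rpow_le (4 * α * ∫ t, |a t|) hα hε
    refine ⟨δ, hδ, fun q' hq' hq'δ φ hφ hφ1 => ?_⟩
    have hφ₀ := H1norm_nonneg φ
    calc _ ≤ 4 * α * H1norm (fun t => q' t - q t) ^ (α - 1) * H1norm φ * ∫ t, |a t| :=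
          abs_dI2_sub_dI2_le ha_L1 hα1 hα2.le hq hq' hφ
      _ = (4 * α * ∫ t, |a t|) * H1norm (fun t => q' t - q t) ^ (α - 1) * H1norm φ := by ring
      _ ≤ (4 * α * ∫ t, |a t|) * δ ^ (α - 1) * 1 := by
          gcongr
          exact H1norm_nonneg _
      _ ≤ ε := by rwa [mul_one]

/-- `I₂` is Fréchet differentiable on `H¹` with derivative `dI2`,
and the derivative depends continuously on `q` (so `I₂ ∈ C¹`). -/
theorem stmt_17 (n : ℕ) (a : ℝ → ℝ) (α : ℝ)
    (ha_cont : Continuous a) (ha_nonneg : ∀ t, 0 ≤ a t)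
    (ha_L1 : Integrable a) (ha_L2 : Integrable (fun t => (a t) ^ 2))
    (hα1 : 1 < α) (hα2 : α < 2) :
    (∀ q : ℝ → EuclideanSpace ℝ (Fin n), IsH1 q →
      ∀ ε : ℝ, 0 < ε → ∃ δ : ℝ, 0 < δ ∧
        ∀ φ : ℝ → EuclideanSpace ℝ (Fin n), IsH1 φ → H1norm φ ≤ δ →
          |I2 a α (fun t => q t + φ t) - I2 a α q - dI2 a α q φ|
            ≤ ε * H1norm φ) ∧
    (∀ q : ℝ → EuclideanSpace ℝ (Fin n), IsH1 q →
      ∀ ε : ℝ, 0 < ε → ∃ δ : ℝ, 0 < δ ∧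
        ∀ q' : ℝ → EuclideanSpace ℝ (Fin n), IsH1 q' →
          H1norm (fun t => q' t - q t) ≤ δ →
          ∀ φ : ℝ → EuclideanSpace ℝ (Fin n), IsH1 φ → H1norm φ ≤ 1 →
            |dI2 a α q' φ - dI2 a α q φ| ≤ ε) :=
  stmt_17_general n a α ha_L1 hα1 hα2
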